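/- Let X ⊆ Kⁿ be a nonempty set and let π : Kⁿ → K^d be an exhibition of affdir(X). Then the restriction of π to X is a bijection from X onto π(X), and for any bijection φ : X → Y with Y ⊆ Kⁿ, the following are equivalent: (1) φ is a risometry; (2) affdir(Y) = affdir(X) and the induced map ψ : π(X) → π(Y) defined by ψ(π(x)) = π(φ(x)) for all x ∈ X is a well-defined risometry. -/

import Mathlib

noncomputable section

open scoped Classical Pointwise

section Preamble

variable {K : Type*} [Field K] {Γ : Type*} [LinearOrderedCommGroupWithZero Γ]

instance (priority := 100) : OrderBot Γ where
  bot := 0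
  bot_le _ := zero_le'

/-- The max-valuation on `K^n`: `v(a) = maxᵢ v(aᵢ)`. -/
def vv (v : Valuation K Γ) {n : ℕ} (x : Fin n → K) : Γ :=
  Finset.univ.sup fun i => v (x i)

/-- `rvEq v x y` expresses `rv(x) = rv(y)` in `RV⁽ⁿ⁾ = Kⁿ/∼`, where
`x ∼ y` iff `v(x−y) < v(x)` or `x = y = 0`. -/
def rvEq (v : Valuation K Γ) {n : ℕ} (x y : Fin n → K) : Prop :=
  vv v (x - y) < vv v x ∨ (x = 0 ∧ y = 0)

/-- Balls in `K` (with `K` itself counting as a ball). -/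
def IsBall1 (v : Valuation K Γ) (B : Set K) : Prop :=
  B = Set.univ ∨ ∃ a : K, ∃ γ : Γ, γ ≠ 0 ∧
    (B = {x | v (x - a) < γ} ∨ B = {x | v (x - a) ≤ γ})

/-- Balls in `Kⁿ` (with `Kⁿ` itself counting as a ball). -/
def IsBall (v : Valuation K Γ) {n : ℕ} (B : Set (Fin n → K)) : Prop :=
  B = Set.univ ∨ ∃ a : Fin n → K, ∃ γ : Γ, γ ≠ 0 ∧
    (B = {x | vv v (x - a) < γ} ∨ B = {x | vv v (x - a) ≤ γ})

/-- Spherical completeness: every nonempty chain of balls in `K` has nonempty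
intersection. -/
def SphericallyComplete (v : Valuation K Γ) : Prop :=
  ∀ C : Set (Set K), C.Nonempty → (∀ B ∈ C, IsBall1 v B) → IsChain (· ⊆ ·) C →
    (⋂ B ∈ C, B).Nonempty

/-- The residue field `K̄` of the valuation ring `𝒪 = {x | v x ≤ 1}`. -/
def Kbar (v : Valuation K Γ) : Type _ :=
  IsLocalRing.ResidueField v.valuationSubring

instance (v : Valuation K Γ) : Field (Kbar v) :=
  inferInstanceAs (Field (IsLocalRing.ResidueField v.valuationSubring))

/-- The residue map `res : 𝒪 → K̄`, extended by the junk value `0` outside `𝒪`. -/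
def res' (v : Valuation K Γ) (x : K) : Kbar v :=
  if h : v x ≤ 1 then IsLocalRing.residue v.valuationSubring ⟨x, h⟩ else 0

/-- The coordinatewise residue map on `Kⁿ`. -/
def resv (v : Valuation K Γ) {n : ℕ} (x : Fin n → K) : Fin n → Kbar v :=
  fun i => res' v (x i)

/-- `res(S)` for a set `S ⊆ Kⁿ`: the set of residues of points of `S ∩ 𝒪ⁿ`. -/
def resSet (v : Valuation K Γ) {n : ℕ} (S : Set (Fin n → K)) : Set (Fin n → Kbar v) :=
  resv v '' {x ∈ S | ∀ i, v (x i) ≤ 1}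

/-- `dir(x) = res(K·x) ⊆ K̄ⁿ`. -/
def dirSet (v : Valuation K Γ) {n : ℕ} (x : Fin n → K) : Set (Fin n → Kbar v) :=
  resSet v {y | ∃ c : K, y = c • x}

/-- The coordinate projection `Kⁿ → K^d` selecting the coordinates `σ 0 < σ 1 < ⋯`. -/
def proj {A : Type*} {n d : ℕ} (σ : Fin d → Fin n) (x : Fin n → A) : Fin d → A :=
  fun k => x (σ k)

/-- `σ` (a strictly increasing selection of `d` of the `n` coordinates) is an
exhibition of the `K̄`-subspace `Ū ⊆ K̄ⁿ` if the corresponding coordinate projection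
`K̄ⁿ → K̄^d` restricts to an isomorphism from `Ū` onto `K̄^d`. -/
def IsExhibition (v : Valuation K Γ) {n d : ℕ} (σ : Fin d → Fin n)
    (Ubar : Submodule (Kbar v) (Fin n → Kbar v)) : Prop :=
  StrictMono σ ∧ Set.BijOn (proj σ) (Ubar : Set (Fin n → Kbar v)) Set.univ

/-- `affdir(C)`: the `K̄`-subspace of `K̄ⁿ` generated by all `dir(x − x')`, `x, x' ∈ C`. -/
def affdir (v : Valuation K Γ) {n : ℕ} (C : Set (Fin n → K)) :
    Submodule (Kbar v) (Fin n → Kbar v) :=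
  Submodule.span (Kbar v) (⋃ x ∈ C, ⋃ x' ∈ C, dirSet v (x - x'))

/-- A matrix has entries in the valuation ring `𝒪`. -/
def EntriesInO (v : Valuation K Γ) {n : ℕ} (M : Matrix (Fin n) (Fin n) K) : Prop :=
  ∀ i j, v (M i j) ≤ 1

/-- `M ∈ GLₙ(𝒪)`: `M` is invertible, with entries in `𝒪`, and its inverse also has
entries in `𝒪`. -/
def MemGLO (v : Valuation K Γ) {n : ℕ} (M : Matrix (Fin n) (Fin n) K) : Prop :=
  EntriesInO v M ∧ ∃ N : Matrix (Fin n) (Fin n) K,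
    M * N = 1 ∧ N * M = 1 ∧ EntriesInO v N

/-- The entrywise residue matrix of `M`. -/
def resM (v : Valuation K Γ) {n : ℕ} (M : Matrix (Fin n) (Fin n) K) :
    Matrix (Fin n) (Fin n) (Kbar v) :=
  fun i j => res' v (M i j)

/-- `DeltaLE v U W γ` expresses `Δ(U, W) ≤ γ`: for every `u ∈ U` there is `w ∈ W`
with `v(u − w) ≤ v(u)·γ`. -/
def DeltaLE (v : Valuation K Γ) {n : ℕ} (U W : Submodule K (Fin n → K)) (γ : Γ) : Prop :=
  ∀ u ∈ U, ∃ w ∈ W, vv v (u - w) ≤ vv v u * γ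

/-- `IsDelta v U W γ` expresses `Δ(U, W) = γ`: `γ` is the minimum of all admissible
bounds. -/
def IsDelta (v : Valuation K Γ) {n : ℕ} (U W : Submodule K (Fin n → K)) (γ : Γ) : Prop :=
  DeltaLE v U W γ ∧ ∀ δ : Γ, DeltaLE v U W δ → γ ≤ δ

end Preamble

variable {K : Type*} [Field K] {Γ : Type*} [LinearOrderedCommGroupWithZero Γ]

/-!
An exhibition of `affdir X` cannot lose the leading term of a vector `z` all of whose
directions lie in `affdir X`: normalising to `v(z) = 1`, `res(z)` is a nonzero vector of
`affdir X`, so some exhibited coordinate of `z` has valuation `v(z)`. Applied to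
`z = x - x'`, this says that `π` preserves `v(x - x')`, so it is injective on `X` and
transports the relation `rv(a) = rv(b)` (that is, `v(a - b) < v(b)`) between `Kⁿ` and `K^d`.
For the converse, if `rv(φ x - φ x') ≠ rv(x - x')`, the error `(φ x - φ x') - (x - x')` is at
least as large as `x - x'`, so its directions lie in `affdir Y + affdir X = affdir X`, and
then `π` would preserve its size, contradicting the hypothesis on `ψ`.
-/

section Valuation

variable (v : Valuation K Γ) {n : ℕ}

lemma le_vv (x : Fin n → K) (i : Fin n) : v (x i) ≤ vv v x :=
  Finset.le_sup (f := fun j => v (x j)) (Finset.mem_univ i)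

lemma vv_le_iff {x : Fin n → K} {γ : Γ} : vv v x ≤ γ ↔ ∀ i, v (x i) ≤ γ := by
  simp [vv, Finset.sup_le_iff]

lemma vv_lt_iff {x : Fin n → K} {γ : Γ} (hγ : γ ≠ 0) :
    vv v x < γ ↔ ∀ i, v (x i) < γ := by
  have hγ' : (⊥ : Γ) < γ := by simpa [bot_eq_zero, zero_lt_iff] using hγ
  rw [vv, Finset.sup_lt_iff hγ']
  simp

@[simp]
lemma vv_zero : vv v (0 : Fin n → K) = 0 := by
  simp [vv]

lemma vv_eq_zero_iff {x : Fin n → K} : vv v x = 0 ↔ x = 0 := by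
  refine ⟨fun h => funext fun i => ?_, fun h => h ▸ vv_zero v⟩
  exact v.zero_iff.mp (le_zero_iff.mp (h ▸ le_vv v x i))

lemma exists_eq_vv {x : Fin n → K} (hx : x ≠ 0) : ∃ i, v (x i) = vv v x := by
  obtain ⟨i₀, -⟩ := Function.ne_iff.mp hx
  obtain ⟨i, -, hi⟩ := Finset.exists_mem_eq_sup Finset.univ ⟨i₀, Finset.mem_univ _⟩
    fun j => v (x j)
  exact ⟨i, hi.symm⟩

lemma vv_add_le (x y : Fin n → K) : vv v (x + y) ≤ max (vv v x) (vv v y) :=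
  Finset.sup_le fun i _ => (v.map_add _ _).trans (max_le_max (le_vv v x i) (le_vv v y i))

@[simp]
lemma vv_neg (x : Fin n → K) : vv v (-x) = vv v x := by
  simp [vv]

lemma vv_sub_comm (x y : Fin n → K) : vv v (x - y) = vv v (y - x) := by
  rw [← vv_neg, neg_sub]

lemma vv_sub_le (x y : Fin n → K) : vv v (x - y) ≤ max (vv v x) (vv v y) := by
  simpa [sub_eq_add_neg] using vv_add_le v x (-y)

lemma vv_smul (c : K) (x : Fin n → K) : vv v (c • x) = v c * vv v x := by
  have hbot : v c * (⊥ : Γ) = ⊥ := by simp [bot_eq_zero]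
  rw [vv, vv,
    Finset.apply_sup_eq_sup_comp_of_linearOrder _ (fun _ _ h => mul_le_mul_right h _) hbot]
  simp [Function.comp_def]

lemma vv_eq_of_sub_lt {a b : Fin n → K} (h : vv v (a - b) < vv v a) : vv v b = vv v a := by
  refine le_antisymm ?_ ?_
  · simpa [max_eq_left h.le] using vv_sub_le v a (a - b)
  · have := vv_add_le v b (a - b)
    rw [add_sub_cancel] at this
    exact (le_max_iff.mp this).resolve_right h.not_ge

lemma rvEq_iff {a b : Fin n → K} :
    rvEq v a b ↔ vv v (a - b) < vv v b ∨ (a = 0 ∧ b = 0) := by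
  refine or_congr_left ⟨fun h => ?_, fun h => ?_⟩
  · rwa [vv_eq_of_sub_lt v h]
  · rw [vv_sub_comm] at h ⊢
    rwa [vv_eq_of_sub_lt v h]

lemma rvEq_symm {a b : Fin n → K} (h : rvEq v a b) : rvEq v b a := by
  rw [rvEq_iff, vv_sub_comm] at h
  exact h.imp_right And.symm

lemma vv_proj_le {d : ℕ} (σ : Fin d → Fin n) (x : Fin n → K) : vv v (proj σ x) ≤ vv v x :=
  Finset.sup_le fun k _ => le_vv v x (σ k)

end Valuation

section Residue

variable (v : Valuation K Γ) {n : ℕ}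

lemma res'_of_le_one {a : K} (h : v a ≤ 1) :
    res' v a = IsLocalRing.residue v.valuationSubring ⟨a, h⟩ :=
  dif_pos h

lemma res'_eq_zero_iff {a : K} (h : v a ≤ 1) : res' v a = 0 ↔ v a < 1 := by
  rw [res'_of_le_one v h]
  exact (IsLocalRing.residue_eq_zero_iff _).trans (Valuation.mem_maximalIdeal_iff _ v)

lemma res'_sub {a b : K} (ha : v a ≤ 1) (hb : v b ≤ 1) :
    res' v (a - b) = res' v a - res' v b := by
  have hab : v (a - b) ≤ 1 := (v.map_sub a b).trans (max_le ha hb)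
  rw [res'_of_le_one v ha, res'_of_le_one v hb, res'_of_le_one v hab]
  exact map_sub (IsLocalRing.residue v.valuationSubring) ⟨a, ha⟩ ⟨b, hb⟩

lemma resv_sub {a b : Fin n → K} (ha : vv v a ≤ 1) (hb : vv v b ≤ 1) :
    resv v (a - b) = resv v a - resv v b :=
  funext fun i => res'_sub v ((le_vv v a i).trans ha) ((le_vv v b i).trans hb)

lemma resv_eq_of_vv_sub_lt_one {a b : Fin n → K} (ha : vv v a ≤ 1) (hb : vv v b ≤ 1)
    (h : vv v (a - b) < 1) : resv v a = resv v b := by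
  rw [← sub_eq_zero, ← resv_sub v ha hb]
  exact funext fun i => (res'_eq_zero_iff v ((le_vv v _ i).trans h.le)).mpr
    ((vv_lt_iff v one_ne_zero).mp h i)

lemma mem_dirSet_iff {z : Fin n → K} {y : Fin n → Kbar v} :
    y ∈ dirSet v z ↔ ∃ c : K, vv v (c • z) ≤ 1 ∧ resv v (c • z) = y := by
  simp only [dirSet, resSet, Set.mem_image, Set.mem_ofPred_eq, vv_le_iff]
  constructor
  · rintro ⟨_, ⟨⟨c, rfl⟩, hc⟩, rfl⟩
    exact ⟨c, hc, rfl⟩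
  · rintro ⟨c, hc, rfl⟩
    exact ⟨c • z, ⟨⟨c, rfl⟩, hc⟩, rfl⟩

lemma dirSet_subset_of_rvEq {a b : Fin n → K} (h : rvEq v a b) : dirSet v a ⊆ dirSet v b := by
  rcases h with h | ⟨rfl, rfl⟩
  · rintro _ hy
    obtain ⟨c, hc, rfl⟩ := (mem_dirSet_iff v).mp hy
    have hcb : vv v (c • b) ≤ 1 := by rwa [vv_smul, vv_eq_of_sub_lt v h, ← vv_smul]
    refine (mem_dirSet_iff v).mpr ⟨c, hcb, ?_⟩
    rcases eq_or_ne c 0 with rfl | hc0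
    · simp only [zero_smul]
    refine resv_eq_of_vv_sub_lt_one v hcb hc ?_
    rw [← smul_sub, vv_smul]
    calc v c * vv v (b - a) < v c * vv v a := by
          rw [vv_sub_comm]
          exact mul_lt_mul_of_pos_left h (zero_lt_iff.mpr ((v.ne_zero_iff).mpr hc0))
      _ ≤ 1 := by rwa [← vv_smul]
  · exact subset_rfl

lemma dirSet_congr {a b : Fin n → K} (h : rvEq v a b) : dirSet v a = dirSet v b :=
  (dirSet_subset_of_rvEq v h).antisymm (dirSet_subset_of_rvEq v (rvEq_symm v h))

lemma dirSet_sub_subset {U : Submodule (Kbar v) (Fin n → Kbar v)} {a b : Fin n → K}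
    (ha : dirSet v a ⊆ U) (hb : dirSet v b ⊆ U) (hle : vv v b ≤ vv v (a - b)) :
    dirSet v (a - b) ⊆ U := by
  rintro _ hy
  obtain ⟨c, hc, rfl⟩ := (mem_dirSet_iff v).mp hy
  have hcb : vv v (c • b) ≤ 1 := by
    rw [vv_smul] at hc ⊢
    exact (mul_le_mul_right hle _).trans hc
  have hca : vv v (c • a) ≤ 1 := by
    have := vv_add_le v (c • a - c • b) (c • b)
    rw [sub_add_cancel, ← smul_sub] at this
    exact this.trans (max_le hc hcb)
  rw [smul_sub, resv_sub v hca hcb]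
  exact U.sub_mem (ha ((mem_dirSet_iff v).mpr ⟨c, hca, rfl⟩))
    (hb ((mem_dirSet_iff v).mpr ⟨c, hcb, rfl⟩))

lemma dirSet_sub_subset_affdir {C : Set (Fin n → K)} {x x' : Fin n → K} (hx : x ∈ C)
    (hx' : x' ∈ C) : dirSet v (x - x') ⊆ affdir v C :=
  (Set.subset_biUnion_of_mem (u := fun x' => dirSet v (x - x')) hx').trans
    ((Set.subset_biUnion_of_mem (u := fun x => ⋃ x' ∈ C, dirSet v (x - x')) hx).trans
      Submodule.subset_span)

lemma affdir_image_eq {X : Set (Fin n → K)} {φ : (Fin n → K) → Fin n → K}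
    (hφ : ∀ x ∈ X, ∀ x' ∈ X, dirSet v (φ x - φ x') = dirSet v (x - x')) :
    affdir v (φ '' X) = affdir v X := by
  unfold affdir
  congr 1
  simp only [Set.biUnion_image]
  exact Set.iUnion₂_congr fun x hx => Set.iUnion₂_congr fun x' hx' => hφ x hx x' hx'

end Residue

section Exhibition

variable {v : Valuation K Γ} {n d : ℕ} {σ : Fin d → Fin n}

lemma vv_proj_eq_of_dirSet_subset {U : Submodule (Kbar v) (Fin n → Kbar v)}
    (hσ : IsExhibition v σ U) {z : Fin n → K} (hz : dirSet v z ⊆ U) :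
    vv v (proj σ z) = vv v z := by
  refine (vv_proj_le v σ z).antisymm (not_lt.mp fun hlt => ?_)
  have hz0 : z ≠ 0 := by rintro rfl; simp at hlt
  obtain ⟨i, hi⟩ := exists_eq_vv v hz0
  have hzi : z i ≠ 0 := by
    rw [← v.ne_zero_iff, hi]
    exact (vv_eq_zero_iff v).not.mpr hz0
  set c := (z i)⁻¹
  have hcz : vv v (c • z) = 1 := by
    rw [vv_smul, map_inv₀, hi, inv_mul_cancel₀]
    rwa [ne_eq, vv_eq_zero_iff]
  have hres0 : resv v (c • z) = 0 := by
    refine hσ.2.injOn (hz ((mem_dirSet_iff v).mpr ⟨c, hcz.le, rfl⟩)) U.zero_mem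
      (funext fun k => ?_)
    have hk : vv v (c • proj σ z) < 1 := by
      rw [vv_smul, ← hcz, vv_smul]
      exact mul_lt_mul_of_pos_left hlt (zero_lt_iff.mpr (by simpa [c] using hzi))
    exact (res'_eq_zero_iff v ((le_vv v _ _).trans hcz.le)).mpr
      ((vv_lt_iff v one_ne_zero).mp hk k)
  have hci : v ((c • z) i) = 1 := by simp [c, hzi]
  exact ((res'_eq_zero_iff v hci.le).mp (congrFun hres0 i)).ne hci

lemma rvEq_proj {a b : Fin n → K} (hb : vv v (proj σ b) = vv v b) (h : rvEq v a b) :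
    rvEq v (proj σ a) (proj σ b) := by
  rw [rvEq_iff] at h ⊢
  rcases h with h | ⟨rfl, rfl⟩
  · exact Or.inl (hb ▸ (vv_proj_le v σ (a - b)).trans_lt h)
  · exact Or.inr ⟨rfl, rfl⟩

lemma rvEq_of_rvEq_proj {a b : Fin n → K} (hb : vv v (proj σ b) = vv v b)
    (hab : vv v b ≤ vv v (a - b) → vv v (proj σ (a - b)) = vv v (a - b))
    (h : rvEq v (proj σ a) (proj σ b)) : rvEq v a b := by
  rw [rvEq_iff] at h ⊢
  rcases h with h | ⟨ha0, hb0⟩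
  · refine Or.inl (not_le.mp fun hle => ?_)
    rw [hb] at h
    exact (hab hle ▸ h).not_ge hle
  · have hb0' : b = 0 := by rw [← vv_eq_zero_iff v, ← hb, hb0, vv_zero]
    subst hb0'
    have hab0 := hab (by simp)
    rw [sub_zero] at hab0
    exact Or.inr ⟨by rw [← vv_eq_zero_iff v, ← hab0, ha0, vv_zero], rfl⟩

variable {X : Set (Fin n → K)}

lemma IsExhibition.vv_proj_sub (hσ : IsExhibition v σ (affdir v X)) {x x' : Fin n → K}
    (hx : x ∈ X) (hx' : x' ∈ X) : vv v (proj σ (x - x')) = vv v (x - x') :=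
  vv_proj_eq_of_dirSet_subset hσ (dirSet_sub_subset_affdir v hx hx')

lemma IsExhibition.injOn_proj (hσ : IsExhibition v σ (affdir v X)) : Set.InjOn (proj σ) X := by
  intro x hx x' hx' h
  rw [← sub_eq_zero, ← vv_eq_zero_iff v, ← hσ.vv_proj_sub hx hx']
  exact (vv_eq_zero_iff v).mpr (sub_eq_zero.mpr h)

end Exhibition

theorem risometry_iff_projected_risometry_general
    (v : Valuation K Γ) {n d : ℕ}
    (X : Set (Fin n → K))
    (σ : Fin d → Fin n) (hσ : IsExhibition v σ (affdir v X)) :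
    Set.InjOn (proj σ) X ∧
    ∀ (Y : Set (Fin n → K)) (φ : (Fin n → K) → Fin n → K),
      Set.BijOn φ X Y →
      ((∀ x ∈ X, ∀ x' ∈ X, rvEq v (φ x - φ x') (x - x')) ↔
        (affdir v Y = affdir v X ∧
          ∃ ψ : (Fin d → K) → Fin d → K,
            (∀ x ∈ X, ψ (proj σ x) = proj σ (φ x)) ∧
            ∀ p ∈ proj σ '' X, ∀ p' ∈ proj σ '' X, rvEq v (ψ p - ψ p') (p - p'))) := by
  refine ⟨hσ.injOn_proj, fun Y φ hφ => ⟨fun hrv => ⟨?_, ?_⟩, ?_⟩⟩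
  · rw [← hφ.image_eq]
    exact affdir_image_eq v fun x hx x' hx' => dirSet_congr v (hrv x hx x' hx')
  · let ψ := fun p => proj σ (φ (Function.invFunOn (proj σ) X p))
    have hψ : ∀ x ∈ X, ψ (proj σ x) = proj σ (φ x) := fun x hx => by
      simp only [ψ, hσ.injOn_proj.leftInvOn_invFunOn hx]
    refine ⟨ψ, hψ, ?_⟩
    rintro _ ⟨x, hx, rfl⟩ _ ⟨x', hx', rfl⟩
    rw [hψ x hx, hψ x' hx']
    exact rvEq_proj (σ := σ) (hσ.vv_proj_sub hx hx') (hrv x hx x' hx')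
  · rintro ⟨hYX, ψ, hψ, hψrv⟩ x hx x' hx'
    have hproj := hψrv _ ⟨x, hx, rfl⟩ _ ⟨x', hx', rfl⟩
    rw [hψ x hx, hψ x' hx'] at hproj
    have hφdir : dirSet v (φ x - φ x') ⊆ affdir v X :=
      hYX ▸ dirSet_sub_subset_affdir v (hφ.mapsTo hx) (hφ.mapsTo hx')
    exact rvEq_of_rvEq_proj (hσ.vv_proj_sub hx hx') (fun hle => vv_proj_eq_of_dirSet_subset hσ
      (dirSet_sub_subset v hφdir (dirSet_sub_subset_affdir v hx hx') hle)) hproj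

/-- if `π` is an exhibition of `affdir X`, then `π` is injective on
`X`, and a bijection `φ : X → Y` is a risometry iff `affdir Y = affdir X` and the
induced map `ψ : π(X) → π(Y)` (with `ψ(π x) = π(φ x)`) is a well-defined risometry. -/
theorem risometry_iff_projected_risometry
    (v : Valuation K Γ) {n d : ℕ}
    (X : Set (Fin n → K)) (hX : X.Nonempty)
    (σ : Fin d → Fin n) (hσ : IsExhibition v σ (affdir v X)) :
    Set.InjOn (proj σ) X ∧
    ∀ (Y : Set (Fin n → K)) (φ : (Fin n → K) → Fin n → K),
      Set.BijOn φ X Y →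
      ((∀ x ∈ X, ∀ x' ∈ X, rvEq v (φ x - φ x') (x - x')) ↔
        (affdir v Y = affdir v X ∧
          ∃ ψ : (Fin d → K) → Fin d → K,
            (∀ x ∈ X, ψ (proj σ x) = proj σ (φ x)) ∧
            ∀ p ∈ proj σ '' X, ∀ p' ∈ proj σ '' X, rvEq v (ψ p - ψ p') (p - p'))) :=
  risometry_iff_projected_risometry_general v X σ hσ
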